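/- arXiv:2504.14731 — 3 statements merged into one kernel-verified Lean document; each statement's English description precedes it below -/
import Mathlib

section
/- Let n be a positive integer and let k = (k₁, …, kₙ) be a vector of real numbers with kᵢ < 1 for every i and k₁ + ⋯ + kₙ = 2. Then there exists a subset I ⊆ {1, …, n} such that |1 − ∑_{i∈I} kᵢ| ≤ 1/3. Equivalently, the curvature gap δ(k) := min over subsets I ⊆ {1,…,n} of |1 − ∑_{i∈I} kᵢ| of any flat cone sphere satisfies δ(k) ≤ 1/3. -/
/-- **Upper bound on the curvature gap** (Lemma 2.2 of the paper).
If `k = (k₁, …, kₙ)` is a curvature vector of a flat cone sphere, i.e. `kᵢ < 1` for all `i`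
and `∑ kᵢ = 2`, then there is a subset `I ⊆ {1, …, n}` with `|1 − ∑_{i∈I} kᵢ| ≤ 1/3`;
equivalently the curvature gap satisfies `δ(k) ≤ 1/3`. -/
theorem curvature_gap_le_one_third
    (n : ℕ) (hn : 0 < n) (k : Fin n → ℝ)
    (hk : ∀ i, k i < 1) (hsum : ∑ i, k i = 2) :
    ∃ I : Finset (Fin n), |1 - ∑ i ∈ I, k i| ≤ 1 / 3 := by
  by_cases hbig : ∃ a, 2/3 ≤ k a
  · obtain ⟨a, ha⟩ := hbig
    refine ⟨{a}, ?_⟩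
    rw [Finset.sum_singleton, abs_le]
    constructor
    · linarith [hk a]
    · linarith
  · push_neg at hbig
    set T := Finset.univ.filter (fun s : Finset (Fin n) => ∑ i ∈ s, k i < 2/3) with hTdef
    have hT : (∅ : Finset (Fin n)) ∈ T := by simp [hTdef]
    obtain ⟨S, hST, hmax⟩ := T.exists_max_image (fun s => ∑ i ∈ s, k i) ⟨∅, hT⟩
    have hSlt : ∑ i ∈ S, k i < 2/3 := by
      have := hST; simp [hTdef] at this; exact this
    have hj : ∃ j, j ∉ S ∧ 0 < k j := by
      by_contra h
      push_neg at h
      have h1 : ∑ i ∈ Sᶜ, k i ≤ 0 :=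
        Finset.sum_nonpos (fun i hi => h i (Finset.mem_compl.mp hi))
      have h2 : ∑ i ∈ S, k i + ∑ i ∈ Sᶜ, k i = ∑ i, k i :=
        Finset.sum_add_sum_compl S k
      rw [hsum] at h2
      linarith
    obtain ⟨j, hjS, hjpos⟩ := hj
    have hsum' : ∑ i ∈ insert j S, k i = k j + ∑ i ∈ S, k i := Finset.sum_insert hjS
    have hge : ¬ (∑ i ∈ insert j S, k i < 2/3) := by
      intro hlt
      have hmem : insert j S ∈ T := by simp [hTdef, hlt]
      have := hmax _ hmem
      rw [hsum'] at this
      linarith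
    push_neg at hge
    refine ⟨insert j S, ?_⟩
    have hub : ∑ i ∈ insert j S, k i < 4/3 := by
      have := hbig j
      rw [hsum']
      linarith
    rw [abs_le]
    constructor <;> linarith
end

section
/- Let d ≥ 1, let C ⊆ ℂ^d be a Borel measurable cone (i.e. r·V ∈ C for every V ∈ C and every real r > 0), let Q be a positive definite real quadratic form on ℂ^d (viewed as a real vector space of dimension 2d), and let A > 0. For ε > 0 define S(ε) = { V = (v₁,…,v_d) ∈ C : |vᵢ|² < ε²·(A − Q(V)) for all 1 ≤ i ≤ d }, and let C₁ = { V ∈ C : |vᵢ| < 1 for all i }. Then there exist constants K > 0 and ε₀ > 0 such that for all 0 < ε < ε₀, | λ(S(ε)) − ε^{2d}·A^d·λ(C₁) | ≤ K·ε^{2d+2}, where λ denotes Lebesgue measure on ℂ^d. -/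
/-!
Since `C` is a cone, scaling by `ε √A` maps `T(ε) = {V ∈ C : |vᵢ|² < 1 − ε² Q(V)}` onto `S(ε)`,
so `λ(S(ε)) = ε^{2d} A^d λ(T(ε))`. If `0 ≤ Q ≤ M` on the unit polydisc, then
`(1 − ε² M) • C₁ ⊆ T(ε) ⊆ C₁`, hence by Bernoulli's inequality
`0 ≤ λ(C₁) − λ(T(ε)) ≤ (1 − (1 − ε² M)^{2d}) λ(C₁) ≤ 2d ε² M λ(C₁)`.
-/

open MeasureTheory Pointwise Module

theorem QuadraticMap.continuous_of_finiteDimensional {E : Type*} [NormedAddCommGroup E]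
    [NormedSpace ℝ E] [FiniteDimensional ℝ E] (Q : QuadraticForm ℝ E) : Continuous Q := by
  have hQ : ⇑Q = fun V => Q.polarBilin.toContinuousBilinearMap V V / 2 := by
    ext V
    simp [QuadraticMap.polar_self]
  rw [hQ]
  exact (Q.polarBilin.toContinuousBilinearMap.continuous₂.comp
    (continuous_id.prodMk continuous_id)).div_const 2

theorem QuadraticMap.exists_nonneg_forall_norm_le_one_le {E : Type*} [NormedAddCommGroup E]
    [NormedSpace ℝ E] [FiniteDimensional ℝ E] (Q : QuadraticForm ℝ E) :
    ∃ M, 0 ≤ M ∧ ∀ V : E, ‖V‖ ≤ 1 → Q V ≤ M := by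
  obtain ⟨M, hM⟩ := (isCompact_closedBall (0 : E) 1).exists_bound_of_continuousOn
    Q.continuous_of_finiteDimensional.continuousOn
  have hbound : ∀ V : E, ‖V‖ ≤ 1 → |Q V| ≤ M := fun V hV => hM V (by simpa using hV)
  exact ⟨M, (abs_nonneg _).trans (hbound 0 (by simp)),
    fun V hV => (le_abs_self _).trans (hbound V hV)⟩

theorem smul_sep_of_smul_mem {𝕜 E : Type*} [Field 𝕜] [LinearOrder 𝕜] [IsStrictOrderedRing 𝕜]
    [AddCommGroup E] [Module 𝕜 E] {C : Set E} (hC : ∀ V ∈ C, ∀ r : 𝕜, 0 < r → r • V ∈ C)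
    (P : E → Prop) {r : 𝕜} (hr : 0 < r) :
    r • {V ∈ C | P V} = {V ∈ C | P (r⁻¹ • V)} := by
  ext V
  rw [Set.mem_smul_set_iff_inv_smul_mem₀ hr.ne']
  refine and_congr_left fun _ => ⟨fun h => ?_, fun h => hC V h _ (inv_pos.mpr hr)⟩
  simpa [hr.ne'] using hC _ h r hr

theorem one_sub_one_sub_pow_le {x : ℝ} (hx : x ≤ 2) (n : ℕ) : 1 - (1 - x) ^ n ≤ n * x := by
  have := one_add_mul_le_pow (a := -x) (by linarith) n
  rw [← sub_eq_add_neg] at this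
  linarith

theorem abs_toReal_measure_sub_le_of_smul_subset {E : Type*} [NormedAddCommGroup E]
    [NormedSpace ℝ E] [MeasurableSpace E] [BorelSpace E] [FiniteDimensional ℝ E]
    (μ : Measure E) [μ.IsAddHaarMeasure] {X Y : Set E} {r : ℝ} (hr : 0 ≤ r)
    (hXY : X ⊆ Y) (hYX : r • Y ⊆ X) (hY : μ Y ≠ ⊤) :
    |(μ X).toReal - (μ Y).toReal| ≤ (1 - r ^ finrank ℝ E) * (μ Y).toReal := by
  have hX : μ X ≠ ⊤ := ne_top_of_le_ne_top hY (measure_mono hXY)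
  have hle : (μ X).toReal ≤ (μ Y).toReal := ENNReal.toReal_mono hY (measure_mono hXY)
  have hge : r ^ finrank ℝ E * (μ Y).toReal ≤ (μ X).toReal := by
    have h := ENNReal.toReal_mono hX (measure_mono hYX)
    rwa [Measure.addHaar_smul_of_nonneg μ hr, ENNReal.toReal_mul,
      ENNReal.toReal_ofReal (by positivity)] at h
  rw [abs_of_nonpos (sub_nonpos.mpr hle)]
  linarith

section Polydisc

variable {ι F : Type*} [NormedAddCommGroup F] [NormedSpace ℝ F]
  {C : Set (ι → F)} (Q : QuadraticForm ℝ (ι → F))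

theorem sep_norm_sq_lt_eq_smul (hC : ∀ V ∈ C, ∀ r : ℝ, 0 < r → r • V ∈ C)
    {ε A : ℝ} (hε : 0 < ε) (hA : 0 < A) :
    {V ∈ C | ∀ i, ‖V i‖ ^ 2 < ε ^ 2 * (A - Q V)} =
      (ε * √A) • {V ∈ C | ∀ i, ‖V i‖ ^ 2 < 1 - ε ^ 2 * Q V} := by
  set c := ε * √A
  have hc : 0 < c := by positivity
  have hc2 : c ^ 2 = ε ^ 2 * A := by rw [mul_pow, Real.sq_sqrt hA.le]
  rw [smul_sep_of_smul_mem hC _ hc]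
  refine Set.sep_ext_iff.mpr fun V _ => forall_congr' fun i => ?_
  rw [QuadraticMap.map_smul, Pi.smul_apply, norm_smul, Real.norm_of_nonneg (by positivity),
    smul_eq_mul, ← div_lt_div_iff_of_pos_right (pow_pos hc 2)]
  field_simp
  rw [hc2]
  constructor <;> intro h <;> linarith

theorem sep_norm_sq_lt_subset (hQ : ∀ V, 0 ≤ Q V) (ε : ℝ) :
    {V ∈ C | ∀ i, ‖V i‖ ^ 2 < 1 - ε ^ 2 * Q V} ⊆ {V ∈ C | ∀ i, ‖V i‖ < 1} := by
  refine fun V ⟨hVC, hV⟩ => ⟨hVC, fun i => ?_⟩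
  nlinarith [hV i, norm_nonneg (V i), mul_nonneg (sq_nonneg ε) (hQ V)]

theorem smul_sep_norm_lt_one_subset [Fintype ι] (hC : ∀ V ∈ C, ∀ r : ℝ, 0 < r → r • V ∈ C)
    {M ε : ℝ} (hM : 0 ≤ M) (hQM : ∀ V, ‖V‖ ≤ 1 → Q V ≤ M) (hεM : ε ^ 2 * M < 1) :
    (1 - ε ^ 2 * M) • {V ∈ C | ∀ i, ‖V i‖ < 1} ⊆ {V ∈ C | ∀ i, ‖V i‖ ^ 2 < 1 - ε ^ 2 * Q V} := by
  set r := 1 - ε ^ 2 * M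
  have hr : 0 < r := by linarith
  have hr1 : r ≤ 1 := by have := mul_nonneg (sq_nonneg ε) hM; linarith
  rw [smul_sep_of_smul_mem hC _ hr]
  refine fun V ⟨hVC, hV⟩ => ⟨hVC, fun i => ?_⟩
  have hVr : ∀ j, ‖V j‖ < r := fun j => by
    simpa [norm_smul, abs_of_pos hr, inv_mul_lt_iff₀ hr] using hV j
  have hQV : ε ^ 2 * Q V ≤ ε ^ 2 * M :=
    mul_le_mul_of_nonneg_left (hQM V ((pi_norm_le_iff_of_nonneg zero_le_one).mpr
      fun j => (hVr j).le.trans hr1)) (sq_nonneg ε)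
  nlinarith [hVr i, norm_nonneg (V i)]

variable [Fintype ι] [FiniteDimensional ℝ F] [MeasurableSpace F] [BorelSpace F]
  (μ : Measure (ι → F)) [μ.IsAddHaarMeasure]

theorem toReal_measure_sep_norm_sq_lt_eq (hC : ∀ V ∈ C, ∀ r : ℝ, 0 < r → r • V ∈ C)
    {ε A : ℝ} (hε : 0 < ε) (hA : 0 < A) :
    (μ {V ∈ C | ∀ i, ‖V i‖ ^ 2 < ε ^ 2 * (A - Q V)}).toReal =
      (ε * √A) ^ finrank ℝ (ι → F) * (μ {V ∈ C | ∀ i, ‖V i‖ ^ 2 < 1 - ε ^ 2 * Q V}).toReal := by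
  rw [sep_norm_sq_lt_eq_smul Q hC hε hA, Measure.addHaar_smul_of_nonneg μ (by positivity),
    ENNReal.toReal_mul, ENNReal.toReal_ofReal (by positivity)]

theorem abs_toReal_measure_sep_norm_sq_lt_sub_le (hC : ∀ V ∈ C, ∀ r : ℝ, 0 < r → r • V ∈ C)
    (hQ : ∀ V, 0 ≤ Q V) {M ε : ℝ} (hM : 0 ≤ M) (hQM : ∀ V, ‖V‖ ≤ 1 → Q V ≤ M)
    (hεM : ε ^ 2 * M < 1) :
    |(μ {V ∈ C | ∀ i, ‖V i‖ ^ 2 < 1 - ε ^ 2 * Q V}).toReal - (μ {V ∈ C | ∀ i, ‖V i‖ < 1}).toReal|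
      ≤ finrank ℝ (ι → F) * (ε ^ 2 * M) * (μ {V ∈ C | ∀ i, ‖V i‖ < 1}).toReal := by
  have hpolydisc : μ {V ∈ C | ∀ i, ‖V i‖ < 1} ≠ ⊤ :=
    ((measure_mono fun V hV => by simpa [pi_norm_lt_iff] using hV.2).trans_lt
      (measure_ball_lt_top (x := 0) (r := 1))).ne
  calc _ ≤ (1 - (1 - ε ^ 2 * M) ^ finrank ℝ (ι → F)) * (μ {V ∈ C | ∀ i, ‖V i‖ < 1}).toReal :=
        abs_toReal_measure_sub_le_of_smul_subset μ (by nlinarith) (sep_norm_sq_lt_subset Q hQ ε)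
          (smul_sep_norm_lt_one_subset Q hC hM hQM hεM) hpolydisc
    _ ≤ _ := by
        gcongr
        exact one_sub_one_sub_pow_le (by nlinarith) _

end Polydisc

theorem volume_truncated_cone_asymptotics_general
    (d : ℕ)
    (C : Set (Fin d → ℂ))
    (hcone : ∀ V ∈ C, ∀ r : ℝ, 0 < r → r • V ∈ C)
    (Q : QuadraticForm ℝ (Fin d → ℂ))
    (hQ : ∀ V : Fin d → ℂ, V ≠ 0 → 0 < Q V)
    (A : ℝ) (hA : 0 < A) :
    ∃ K > (0 : ℝ), ∃ ε₀ > (0 : ℝ), ∀ ε : ℝ, 0 < ε → ε < ε₀ →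
      |(volume {V ∈ C | ∀ i, ‖V i‖ ^ 2 < ε ^ 2 * (A - Q V)}).toReal
        - ε ^ (2 * d) * A ^ d * (volume {V ∈ C | ∀ i, ‖V i‖ < 1}).toReal|
        ≤ K * ε ^ (2 * d + 2) := by
  obtain ⟨M, hM, hQM⟩ := Q.exists_nonneg_forall_norm_le_one_le
  have hfinrank : finrank ℝ (Fin d → ℂ) = 2 * d := by
    simp [Module.finrank_pi_fintype, mul_comm]
  set L := (volume {V ∈ C | ∀ i, ‖V i‖ < 1}).toReal
  refine ⟨2 * d * M * A ^ d * L + 1, by positivity, 1 / (M + 1), by positivity, fun ε hε hε₀ => ?_⟩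
  have hεM : ε ^ 2 * M < 1 := by
    rw [lt_div_iff₀ (by positivity)] at hε₀
    nlinarith
  have hscale : (ε * √A) ^ finrank ℝ (Fin d → ℂ) = ε ^ (2 * d) * A ^ d := by
    rw [hfinrank, pow_mul, mul_pow, Real.sq_sqrt hA.le, mul_pow, ← pow_mul]
  have hgap := abs_toReal_measure_sep_norm_sq_lt_sub_le Q volume hcone
    (QuadraticMap.PosDef.nonneg hQ) hM hQM hεM
  rw [hfinrank] at hgap
  rw [toReal_measure_sep_norm_sq_lt_eq Q volume hcone hε hA, hscale, ← mul_sub, abs_mul,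
    abs_of_nonneg (by positivity)]
  calc ε ^ (2 * d) * A ^ d * |_|
      ≤ ε ^ (2 * d) * A ^ d * (2 * d * (ε ^ 2 * M) * L) := by
        gcongr
        exact_mod_cast hgap
    _ ≤ (2 * d * M * A ^ d * L + 1) * ε ^ (2 * d + 2) := by
        rw [pow_add]
        nlinarith [pow_pos hε (2 * d), pow_pos hε 2]

/-- **Asymptotic volume of truncated cones** (the measure-theoretic core of Lemma 6.13).
Let `C ⊆ ℂ^d` be a measurable cone, `Q` a positive definite real quadratic form on `ℂ^d`,
and `A > 0`. For `S(ε) = {V ∈ C : |vᵢ|² < ε²(A − Q(V)) ∀i}` and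
`C₁ = {V ∈ C : |vᵢ| < 1 ∀i}`, there are `K > 0` and `ε₀ > 0` with
`|λ(S(ε)) − ε^{2d}·A^d·λ(C₁)| ≤ K·ε^{2d+2}` for all `0 < ε < ε₀`. -/
theorem volume_truncated_cone_asymptotics
    (d : ℕ) (hd : 1 ≤ d)
    (C : Set (Fin d → ℂ)) (hC : MeasurableSet C)
    (hcone : ∀ V ∈ C, ∀ r : ℝ, 0 < r → r • V ∈ C)
    (Q : QuadraticForm ℝ (Fin d → ℂ))
    (hQ : ∀ V : Fin d → ℂ, V ≠ 0 → 0 < Q V)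
    (A : ℝ) (hA : 0 < A) :
    ∃ K > (0 : ℝ), ∃ ε₀ > (0 : ℝ), ∀ ε : ℝ, 0 < ε → ε < ε₀ →
      |(volume {V ∈ C | ∀ i, ‖V i‖ ^ 2 < ε ^ 2 * (A - Q V)}).toReal
        - ε ^ (2 * d) * A ^ d * (volume {V ∈ C | ∀ i, ‖V i‖ < 1}).toReal|
        ≤ K * ε ^ (2 * d + 2) :=
  volume_truncated_cone_asymptotics_general d C hcone Q hQ A hA
end

section
/- Let n ≥ 2 and let p : {1,…,n} → ℂ be an injective map. Among all trees T on the vertex set {1,…,n} (connected acyclic simple graphs) consider the total Euclidean length L(T) = ∑_{{a,b} ∈ E(T)} |p(a) − p(b)|, and let T be a tree minimizing L. Then the edges of T, realized as straight segments in the plane, have pairwise disjoint interiors: for any two distinct edges {a, b} and {c, d} of T, the open segments joining p(a) to p(b) and joining p(c) to p(d) are disjoint. -/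
/-- The Euclidean length of an edge (an unordered pair of vertices) under a planar
embedding `p` of the vertices. -/
noncomputable def edgeLength {n : ℕ} (p : Fin n → ℂ) : Sym2 (Fin n) → ℝ :=
  Sym2.lift ⟨fun a b => dist (p a) (p b), fun a b => dist_comm (p a) (p b)⟩

/-!
Deleting an edge `e` of a tree leaves two components, and replacing `e` by any edge joining
them gives again a tree; so in a shortest tree no such replacement is strictly shorter than `e`.
For two distinct tree edges `ab`, `cd`, label them so that `a` and `d` are the endpoints farthest
from the other edge: then `ab` may be replaced by `ac` or `ad`, and `cd` by `da` or `db`.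
If the open segments met at `X`, the triangle inequality through `X` gives
`|ac| + |bd| ≤ |ab| + |cd|`, with equality only if `b = c` by strict convexity; and when `b = c`,
the points `a` and `d` lie on one ray from `b`, so `|ad| < max |ab| |bd|`.
Either way one of the four replacements is strictly shorter.
-/

section Segments

variable {E : Type*} [NormedAddCommGroup E] [NormedSpace ℝ E]

theorem dist_lt_max_of_mem_openSegment_of_mem_openSegment {A B D X : E} (hAB : A ≠ B)
    (hA : X ∈ openSegment ℝ B A) (hD : X ∈ openSegment ℝ B D) :
    dist A D < max (dist B A) (dist B D) := by
  rw [openSegment_eq_image_lineMap] at hA hD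
  obtain ⟨t, ⟨ht, -⟩, hXt⟩ := hA
  obtain ⟨s, ⟨hs, -⟩, hXs⟩ := hD
  rw [AffineMap.lineMap_apply_module', ← eq_sub_iff_add_eq] at hXt hXs
  have hBA : t * dist B A = ‖X - B‖ := by
    rw [← hXt, norm_smul, Real.norm_of_nonneg ht.le, dist_eq_norm']
  have hBD : s * dist B D = ‖X - B‖ := by
    rw [← hXs, norm_smul, Real.norm_of_nonneg hs.le, dist_eq_norm']
  have hAD : s * t * dist A D = |s - t| * ‖X - B‖ := by
    have : (s * t) • (A - D) = (s - t) • (X - B) := by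
      linear_combination (norm := module) s • hXt - t • hXs
    rw [dist_eq_norm, ← Real.norm_of_nonneg (mul_pos hs ht).le, ← Real.norm_eq_abs, ← norm_smul,
      this, norm_smul]
  have hr : 0 < ‖X - B‖ := by rw [← hBA]; exact mul_pos ht (dist_pos.mpr hAB.symm)
  have hst : 0 < s * t := mul_pos hs ht
  rcases le_total s t with h | h
  · refine lt_max_of_lt_right (lt_of_mul_lt_mul_left ?_ hst.le)
    calc s * t * dist A D = (t - s) * ‖X - B‖ := by rw [hAD, abs_of_nonpos (by linarith)]; ring
      _ < t * ‖X - B‖ := by gcongr; linarith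
      _ = s * t * dist B D := by rw [← hBD]; ring
  · refine lt_max_of_lt_left (lt_of_mul_lt_mul_left ?_ hst.le)
    calc s * t * dist A D = (s - t) * ‖X - B‖ := by rw [hAD, abs_of_nonneg (by linarith)]
      _ < s * ‖X - B‖ := by gcongr; linarith
      _ = s * t * dist B A := by rw [← hBA]; ring

variable [StrictConvexSpace ℝ E]

theorem eq_of_mem_openSegment_of_dist_le {A B C D X : E} (hAB : X ∈ openSegment ℝ A B)
    (hCD : X ∈ openSegment ℝ C D) (hAC : dist A B ≤ dist A C) (hBD : dist C D ≤ dist B D) :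
    B = C := by
  rw [openSegment_eq_image_lineMap] at hAB
  obtain ⟨t, ⟨ht₀, ht₁⟩, hX⟩ := hAB
  have hAX : dist A X = t * dist A B := by
    rw [← hX, dist_left_lineMap, Real.norm_of_nonneg ht₀.le]
  have hXB : dist X B = (1 - t) * dist A B := by
    rw [← hX, dist_lineMap_right, Real.norm_of_nonneg (sub_nonneg.mpr ht₁.le)]
  have hCXD := dist_add_dist_of_mem_segment (openSegment_subset_segment ℝ C D hCD)
  have hACX := dist_triangle A X C
  have hBXD := dist_triangle B X D
  rw [dist_comm C X] at hCXD
  rw [dist_comm B X] at hBXD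
  have hAXB : dist A X + dist X B = dist A B := by rw [hAX, hXB]; ring
  have hAC_eq : dist A C = dist A B := by linarith
  have hX' : X = AffineMap.lineMap A C t :=
    eq_lineMap_of_dist_eq_mul_of_dist_eq_mul (by rw [hAC_eq, hAX]) (by rw [hAC_eq]; linarith)
  rw [← hX, AffineMap.lineMap_apply_module', AffineMap.lineMap_apply_module', add_left_inj] at hX'
  exact sub_left_injective (smul_right_injective E ht₀.ne' hX')

theorem dist_lt_or_of_mem_openSegment {A B C D X : E} (hAB : A ≠ B)
    (h₁ : X ∈ openSegment ℝ A B) (h₂ : X ∈ openSegment ℝ C D) :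
    dist A C < dist A B ∨ dist A D < dist A B ∨ dist D A < dist C D ∨ dist D B < dist C D := by
  by_contra! h
  obtain ⟨hAC, hAD, hDA, hDB⟩ := h
  obtain rfl := eq_of_mem_openSegment_of_dist_le h₁ h₂ hAC (dist_comm D B ▸ hDB)
  have := dist_lt_max_of_mem_openSegment_of_mem_openSegment hAB (openSegment_symm ℝ A B ▸ h₁) h₂
  rw [dist_comm B A, dist_comm D A] at *
  exact this.not_ge (max_le hAD hDA)

end Segments

namespace SimpleGraph

variable {V : Type*} {H T : SimpleGraph V} {a b c d u v x y : V}

theorem Reachable.of_sup_edge (h : (H ⊔ edge u v).Reachable x y) :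
    H.Reachable x y ∨ (H.Reachable x u ∧ H.Reachable v y) ∨
      (H.Reachable x v ∧ H.Reachable u y) := by
  rw [reachable_iff_reflTransGen] at h
  induction h with
  | refl => exact Or.inl .rfl
  | tail _ hadj ih =>
    rw [sup_adj, edge_adj] at hadj
    rcases hadj with hadj | ⟨⟨rfl, rfl⟩ | ⟨rfl, rfl⟩, -⟩ <;>
      grind [Reachable.trans, Reachable.symm, Adj.reachable, Reachable.refl]

theorem Reachable.of_sup_edge_of_reachable (huv : H.Reachable u v)
    (h : (H ⊔ edge u v).Reachable x y) : H.Reachable x y := by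
  rcases h.of_sup_edge with h | ⟨hxu, hvy⟩ | ⟨hxv, huy⟩
  exacts [h, hxu.trans (huv.trans hvy), hxv.trans (huv.symm.trans huy)]

theorem IsTree.deleteEdges_sup_edge (hT : T.IsTree)
    (hxy : ¬(T.deleteEdges {s(u, v)}).Reachable x y) :
    (T.deleteEdges {s(u, v)} ⊔ edge x y).IsTree := by
  set H := T.deleteEdges {s(u, v)}
  have hT_le : T ≤ H ⊔ edge u v := le_sdiff_sup
  have hne : x ≠ y := by rintro rfl; exact hxy .rfl
  have hxy_adj : (H ⊔ edge x y).Adj x y := Or.inr (by simp [edge_adj, hne])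
  have huv : (H ⊔ edge x y).Reachable u v := by
    have hH_le : H ≤ H ⊔ edge x y := le_sup_left
    rcases ((hT.connected.mono hT_le).preconnected x y).of_sup_edge with
      h | ⟨hxu, hvy⟩ | ⟨hxv, huy⟩
    · exact absurd h hxy
    · exact (hxu.mono hH_le).symm.trans (hxy_adj.reachable.trans (hvy.mono hH_le).symm)
    · exact (huy.mono hH_le).trans (hxy_adj.reachable.symm.trans (hxv.mono hH_le))
  refine ⟨?_, (hT.isAcyclic.anti (deleteEdges_le _)).sup_edge_of_not_reachable hxy⟩
  have := hT.connected.nonempty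
  refine Connected.mk fun a b ↦ Reachable.of_sup_edge_of_reachable huv ?_
  exact (hT.connected.preconnected a b).mono (hT_le.trans (sup_le_sup_right le_sup_left _))

theorem IsAcyclic.not_reachable_deleteEdges_or (hT : T.IsAcyclic) (hab : T.Adj a b)
    (hcd : (T.deleteEdges {s(a, b)}).Reachable c d) :
    (¬(T.deleteEdges {s(a, b)}).Reachable a c ∧ ¬(T.deleteEdges {s(a, b)}).Reachable a d) ∨
      (¬(T.deleteEdges {s(a, b)}).Reachable b c ∧ ¬(T.deleteEdges {s(a, b)}).Reachable b d) := by
  have hbridge : ¬(T.deleteEdges {s(a, b)}).Reachable a b :=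
    isBridge_iff.mp (isAcyclic_iff_forall_adj_isBridge.mp hT hab)
  by_cases hac : (T.deleteEdges {s(a, b)}).Reachable a c
  · exact Or.inr ⟨fun hbc ↦ hbridge (hac.trans hbc.symm),
      fun hbd ↦ hbridge (hac.trans (hcd.trans hbd.symm))⟩
  · exact Or.inl ⟨hac, fun had ↦ hac (had.trans hcd.symm)⟩

section MinimumSpanningTree

variable [Finite V] {w : Sym2 V → ℝ}

theorem weight_le_of_not_reachable_deleteEdges (hT : T.IsTree)
    (hmin : ∀ G : SimpleGraph V, G.IsTree → ∑ᶠ e ∈ T.edgeSet, w e ≤ ∑ᶠ e ∈ G.edgeSet, w e)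
    (he : s(u, v) ∈ T.edgeSet) (hxy : ¬(T.deleteEdges {s(u, v)}).Reachable x y) :
    w s(u, v) ≤ w s(x, y) := by
  have hne : x ≠ y := by rintro rfl; exact hxy .rfl
  have hnew : s(x, y) ∉ T.edgeSet \ {s(u, v)} := fun h ↦
    hxy (Adj.reachable (by rwa [← mem_edgeSet, edgeSet_deleteEdges]))
  have hfin : (T.edgeSet \ {s(u, v)}).Finite := Set.toFinite _
  have hT_sum : ∑ᶠ e ∈ T.edgeSet, w e = w s(u, v) + ∑ᶠ e ∈ T.edgeSet \ {s(u, v)}, w e := by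
    rw [← finsum_mem_insert _ (fun h ↦ h.2 rfl) hfin, Set.insert_sdiff_self_of_mem he]
  have hG_edges : (T.deleteEdges {s(u, v)} ⊔ edge x y).edgeSet =
      insert s(x, y) (T.edgeSet \ {s(u, v)}) := by
    rw [edgeSet_sup, edgeSet_deleteEdges, edgeSet_edge_of_ne hne, Set.union_singleton]
  have := hmin _ (hT.deleteEdges_sup_edge hxy)
  rwa [hG_edges, finsum_mem_insert _ hnew hfin, hT_sum, add_le_add_iff_right] at this

end MinimumSpanningTree

end SimpleGraph

open SimpleGraph

section Embedding

variable {n : ℕ} {p : Fin n → ℂ} {T : SimpleGraph (Fin n)} {a b c d : Fin n}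

theorem disjoint_openSegment_of_separated (hp : Function.Injective p) (hT : T.IsTree)
    (hmin : ∀ G : SimpleGraph (Fin n), G.IsTree →
      (∑ᶠ e ∈ T.edgeSet, edgeLength p e) ≤ ∑ᶠ e ∈ G.edgeSet, edgeLength p e)
    (hab : s(a, b) ∈ T.edgeSet) (hcd : s(c, d) ∈ T.edgeSet)
    (hac : ¬(T.deleteEdges {s(a, b)}).Reachable a c)
    (had : ¬(T.deleteEdges {s(a, b)}).Reachable a d)
    (hda : ¬(T.deleteEdges {s(c, d)}).Reachable d a)
    (hdb : ¬(T.deleteEdges {s(c, d)}).Reachable d b) :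
    Disjoint (openSegment ℝ (p a) (p b)) (openSegment ℝ (p c) (p d)) := by
  refine Set.disjoint_left.mpr fun X h₁ h₂ ↦ ?_
  rcases dist_lt_or_of_mem_openSegment (hp.ne (T.mem_edgeSet.mp hab).ne) h₁ h₂ with h | h | h | h
  exacts [(weight_le_of_not_reachable_deleteEdges hT hmin hab hac).not_gt h,
    (weight_le_of_not_reachable_deleteEdges hT hmin hab had).not_gt h,
    (weight_le_of_not_reachable_deleteEdges hT hmin hcd hda).not_gt h,
    (weight_le_of_not_reachable_deleteEdges hT hmin hcd hdb).not_gt h]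

end Embedding

theorem shortest_spanning_tree_embedded_general
    (n : ℕ) (p : Fin n → ℂ) (hp : Function.Injective p)
    (T : SimpleGraph (Fin n)) (hT : T.IsTree)
    (hmin : ∀ G : SimpleGraph (Fin n), G.IsTree →
      (∑ᶠ e ∈ T.edgeSet, edgeLength p e) ≤ ∑ᶠ e ∈ G.edgeSet, edgeLength p e)
    (a b c d : Fin n)
    (he₁ : s(a, b) ∈ T.edgeSet) (he₂ : s(c, d) ∈ T.edgeSet)
    (hne : s(a, b) ≠ s(c, d)) :
    Disjoint (openSegment ℝ (p a) (p b)) (openSegment ℝ (p c) (p d)) := by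
  have hcd_reach : (T.deleteEdges {s(a, b)}).Reachable c d :=
    Adj.reachable ((deleteEdges_adj ..).mpr ⟨he₂, hne.symm⟩)
  have hab_reach : (T.deleteEdges {s(c, d)}).Reachable a b :=
    Adj.reachable ((deleteEdges_adj ..).mpr ⟨he₁, hne⟩)
  have he₁' : s(b, a) ∈ T.edgeSet := Sym2.eq_swap ▸ he₁
  have he₂' : s(d, c) ∈ T.edgeSet := Sym2.eq_swap ▸ he₂
  rcases hT.isAcyclic.not_reachable_deleteEdges_or (T.mem_edgeSet.mp he₁) hcd_reach with
    ⟨hac, had⟩ | ⟨hbc, hbd⟩ <;>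
  rcases hT.isAcyclic.not_reachable_deleteEdges_or (T.mem_edgeSet.mp he₂) hab_reach with
    ⟨hca, hcb⟩ | ⟨hda, hdb⟩
  · rw [openSegment_symm ℝ (p c)]
    exact disjoint_openSegment_of_separated hp hT hmin he₁ he₂' had hac
      (by rwa [Sym2.eq_swap]) (by rwa [Sym2.eq_swap])
  · exact disjoint_openSegment_of_separated hp hT hmin he₁ he₂ hac had hda hdb
  · rw [openSegment_symm ℝ (p a), openSegment_symm ℝ (p c)]
    exact disjoint_openSegment_of_separated hp hT hmin he₁' he₂' (by rwa [Sym2.eq_swap])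
      (by rwa [Sym2.eq_swap]) (by rwa [Sym2.eq_swap]) (by rwa [Sym2.eq_swap])
  · rw [openSegment_symm ℝ (p a)]
    exact disjoint_openSegment_of_separated hp hT hmin he₁' he₂ (by rwa [Sym2.eq_swap])
      (by rwa [Sym2.eq_swap]) hdb hda

/-- **Shortest spanning trees in the plane are embedded** (planar instance of the lemma
of Section 5.3 of the paper). Let `p : {1,…,n} → ℂ` be injective, and let `T` be a tree
on the vertex set `{1,…,n}` minimizing the total Euclidean length
`∑_{{a,b} ∈ E(T)} |p(a) − p(b)|` among all trees. Then any two distinct edges of `T`,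
realized as straight segments in the plane, have disjoint open interiors. -/
theorem shortest_spanning_tree_embedded
    (n : ℕ) (hn : 2 ≤ n) (p : Fin n → ℂ) (hp : Function.Injective p)
    (T : SimpleGraph (Fin n)) (hT : T.IsTree)
    (hmin : ∀ G : SimpleGraph (Fin n), G.IsTree →
      (∑ᶠ e ∈ T.edgeSet, edgeLength p e) ≤ ∑ᶠ e ∈ G.edgeSet, edgeLength p e)
    (a b c d : Fin n)
    (he₁ : s(a, b) ∈ T.edgeSet) (he₂ : s(c, d) ∈ T.edgeSet)
    (hne : s(a, b) ≠ s(c, d)) :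
    Disjoint (openSegment ℝ (p a) (p b)) (openSegment ℝ (p c) (p d)) :=
  shortest_spanning_tree_embedded_general n p hp T hT hmin a b c d he₁ he₂ hne
end
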